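/- arXiv:1307.2537 — 2 statements merged into one kernel-verified Lean document; each statement's English description precedes it below -/
import Mathlib

section
/- If a cost minimization game is (λ,μ)-coalitionally smooth with λ ≥ 0 and 0 ≤ μ < 1, then every strong Nash equilibrium s satisfies SC(s) ≤ (λ/(1−μ)) · SC(s*), where s* is a socially optimal profile. -/
open Finset

/-- Coalitional deviation: players in `C` switch to `t`, others keep `s`. -/
def dev {n : ℕ} {S : Fin n → Type*} (s t : ∀ i, S i) (C : Finset (Fin n)) : ∀ i, S i :=
  fun i => if i ∈ C then t i else s i

/-- `N_{π(i)} = {j : π(j) ≥ π(i)}`, the suffix of the permutation starting at `i`. -/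
def suffixSet {n : ℕ} (π : Equiv.Perm (Fin n)) (i : Fin n) : Finset (Fin n) :=
  Finset.univ.filter fun j => π i ≤ π j

/-
A strong Nash equilibrium `s` yields an ordering of the players along which the smoothness
inequality can be compared with `SC(s)`: the grand coalition, deviating to `s*`, contains a player
who does not gain; remove him and repeat with the remaining coalition. Listing the players in the
order of removal gives a permutation `π` such that every player `i` weakly loses when the suffix
coalition `N_{π(i)}` moves to `s*`. Summing, `SC(s) ≤ λ·SC(s*) + μ·SC(s)`, and `μ < 1` finishes.
-/

open Function

theorem exists_rank_of_forall_nonempty {α : Type*} [DecidableEq α] (P : α → Finset α → Prop)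
    (h : ∀ C : Finset α, C.Nonempty → ∃ i ∈ C, P i C) (C : Finset α) :
    ∃ r : α → ℕ, Set.InjOn r C ∧ ∀ i ∈ C, P i (C.filter fun j => r i ≤ r j) := by
  induction C using Finset.strongInduction with
  | _ C ih =>
    rcases C.eq_empty_or_nonempty with rfl | hC
    · exact ⟨fun _ => 0, by simp, by simp⟩
    obtain ⟨i, hi, hPi⟩ := h C hC
    obtain ⟨r, hinj, hr⟩ := ih _ (erase_ssubset hi)
    refine ⟨fun j => if j = i then 0 else r j + 1, ?_, ?_⟩
    · intro a ha b hb hab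
      by_cases hai : a = i <;> by_cases hbi : b = i <;> simp only [hai, hbi, if_true, if_false] at hab
      · exact hai.trans hbi.symm
      · omega
      · omega
      · exact hinj (mem_erase.2 ⟨hai, ha⟩) (mem_erase.2 ⟨hbi, hb⟩) (by omega)
    · intro j hj
      by_cases hji : j = i
      · subst hji
        simpa using hPi
      · convert hr j (mem_erase.2 ⟨hji, hj⟩) using 1
        ext k
        by_cases hki : k = i <;> simp [hji, hki]

theorem exists_perm_le_iff_of_injective {n : ℕ} {β : Type*} [LinearOrder β] (r : Fin n → β)
    (hr : Injective r) : ∃ π : Equiv.Perm (Fin n), ∀ i j, π i ≤ π j ↔ r i ≤ r j := by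
  have hmono : StrictMono (r ∘ Tuple.sort r) :=
    (Tuple.monotone_sort r).strictMono_of_injective (hr.comp (Tuple.sort r).injective)
  exact ⟨(Tuple.sort r).symm, fun i j => by simp [← hmono.le_iff_le]⟩

theorem exists_perm_forall_suffixSet {n : ℕ} (P : Fin n → Finset (Fin n) → Prop)
    (h : ∀ C : Finset (Fin n), C.Nonempty → ∃ i ∈ C, P i C) :
    ∃ π : Equiv.Perm (Fin n), ∀ i, P i (suffixSet π i) := by
  obtain ⟨r, hinj, hr⟩ := exists_rank_of_forall_nonempty P h univ
  obtain ⟨π, hπ⟩ := exists_perm_le_iff_of_injective r (Set.injOn_univ.1 (by simpa using hinj))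
  refine ⟨π, fun i => ?_⟩
  simpa [suffixSet, hπ] using hr i (mem_univ i)

theorem strong_price_of_anarchy_cost_general {n : ℕ} {S : Fin n → Type*}
    (c : ∀ _ : Fin n, (∀ j, S j) → ℝ)
    (lam mu : ℝ) (hmu1 : mu < 1)
    (sstar : ∀ j, S j)
    (hsmooth : ∀ (s : ∀ j, S j) (π : Equiv.Perm (Fin n)),
      ∑ i, c i (dev s sstar (suffixSet π i)) ≤ lam * ∑ i, c i sstar + mu * ∑ i, c i s)
    (s : ∀ j, S j)
    (hSNE : ∀ C : Finset (Fin n), C.Nonempty → ∀ sC : ∀ j, S j,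
      ∃ i ∈ C, c i s ≤ c i (dev s sC C)) :
    ∑ i, c i s ≤ lam / (1 - mu) * ∑ i, c i sstar := by
  obtain ⟨π, hπ⟩ := exists_perm_forall_suffixSet (fun i C => c i s ≤ c i (dev s sstar C))
    fun C hC => hSNE C hC sstar
  have hcost : ∑ i, c i s ≤ lam * ∑ i, c i sstar + mu * ∑ i, c i s :=
    (sum_le_sum fun i _ => hπ i).trans (hsmooth s π)
  rw [div_mul_eq_mul_div, le_div_iff₀ (sub_pos.2 hmu1)]
  linarith

/-- in a (λ,μ)-coalitionally smooth cost-minimization game with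
0 ≤ μ < 1, every strong Nash equilibrium has social cost at most λ/(1−μ) times
the minimum social cost. -/
theorem strong_price_of_anarchy_cost {n : ℕ} {S : Fin n → Type*}
    (c : ∀ _ : Fin n, (∀ j, S j) → ℝ)
    (hc : ∀ i s, 0 ≤ c i s)
    (lam mu : ℝ) (hlam : 0 ≤ lam) (hmu0 : 0 ≤ mu) (hmu1 : mu < 1)
    (sstar : ∀ j, S j)
    (hopt : ∀ s : ∀ j, S j, ∑ i, c i sstar ≤ ∑ i, c i s)
    (hsmooth : ∀ (s : ∀ j, S j) (π : Equiv.Perm (Fin n)),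
      ∑ i, c i (dev s sstar (suffixSet π i)) ≤ lam * ∑ i, c i sstar + mu * ∑ i, c i s)
    (s : ∀ j, S j)
    (hSNE : ∀ C : Finset (Fin n), C.Nonempty → ∀ sC : ∀ j, S j,
      ∃ i ∈ C, c i s ≤ c i (dev s sC C)) :
    ∑ i, c i s ≤ lam / (1 - mu) * ∑ i, c i sstar :=
  strong_price_of_anarchy_cost_general c lam mu hmu1 sstar hsmooth s hSNE
end

section
/- In a fair cost-sharing game with n players, every strong Nash equilibrium has social cost at most H_n times the minimum social cost. -/
open Finset

/-- Number of players using resource `r` under profile `s`. -/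
def congestion {n : ℕ} {R : Type*} [Fintype R] [DecidableEq R] (s : Fin n → Finset R) (r : R) : ℕ :=
  (Finset.univ.filter fun i => r ∈ s i).card

/-- Fair-sharing cost of player `i`. -/
noncomputable def shareCost {n : ℕ} {R : Type*} [Fintype R] [DecidableEq R] (c : R → ℝ) (s : Fin n → Finset R)
    (i : Fin n) : ℝ :=
  ∑ r ∈ s i, c r / (congestion s r : ℝ)

/-!
Compare the strong equilibrium `s` with an arbitrary feasible profile `t`. Every nonempty
coalition `C` has a member `i` who does not gain when all of `C` switches to `t`, and there `i`
shares each of its resources `r` with at least the `k_C(r)` members of `C` using `r` in `t`.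
Removing `i` and recursing bounds the cost of `C` under `s` by `∑ r, c r * H (k_C(r))`, because
`H (k + 1) - H k = 1 / (k + 1)`. For the grand coalition `k ≤ n`, while the social cost of `t` is
the total cost of the resources it uses.
-/

lemma harmonic_mono : Monotone harmonic :=
  monotone_nat_of_le_succ fun k => by
    rw [harmonic_succ]
    exact le_add_of_nonneg_right (by positivity)

lemma harmonic_cast_eq_sum (n : ℕ) :
    (harmonic n : ℝ) = ∑ k ∈ range n, 1 / ((k : ℝ) + 1) := by
  simp [harmonic]

section CostSharing

variable {n : ℕ} {R : Type*} [DecidableEq R]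

def coalitionLoad (C : Finset (Fin n)) (t : Fin n → Finset R) (r : R) : ℕ :=
  #{j ∈ C | r ∈ t j}

lemma coalitionLoad_pos {C : Finset (Fin n)} {t : Fin n → Finset R} {i : Fin n} {r : R}
    (hi : i ∈ C) (hr : r ∈ t i) : 0 < coalitionLoad C t r :=
  card_pos.2 ⟨i, mem_filter.2 ⟨hi, hr⟩⟩

lemma coalitionLoad_erase_add_one {C : Finset (Fin n)} {t : Fin n → Finset R} {i : Fin n}
    {r : R} (hi : i ∈ C) (hr : r ∈ t i) :
    coalitionLoad (C.erase i) t r + 1 = coalitionLoad C t r := by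
  rw [coalitionLoad, filter_erase, card_erase_add_one (mem_filter.2 ⟨hi, hr⟩), coalitionLoad]

lemma coalitionLoad_erase_of_notMem {C : Finset (Fin n)} {t : Fin n → Finset R} {i : Fin n}
    {r : R} (hr : r ∉ t i) : coalitionLoad (C.erase i) t r = coalitionLoad C t r := by
  rw [coalitionLoad, filter_erase, erase_eq_of_notMem (by simp [hr]), coalitionLoad]

variable [Fintype R]

lemma coalitionLoad_le_congestion_dev (s t : Fin n → Finset R) (C : Finset (Fin n)) (r : R) :
    coalitionLoad C t r ≤ congestion (dev s t C) r := by
  refine card_le_card fun j hj => ?_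
  obtain ⟨hjC, hjr⟩ := mem_filter.1 hj
  exact mem_filter.2 ⟨mem_univ j, by simpa [dev, hjC] using hjr⟩

variable {c : R → ℝ}

lemma shareCost_dev_le (hc : ∀ r, 0 ≤ c r) (s t : Fin n → Finset R) {C : Finset (Fin n)}
    {i : Fin n} (hi : i ∈ C) :
    shareCost c (dev s t C) i ≤ ∑ r ∈ t i, c r / coalitionLoad C t r := by
  rw [shareCost, show dev s t C i = t i by simp [dev, hi]]
  refine sum_le_sum fun r hr => div_le_div_of_nonneg_left (hc r) ?_ ?_
  · exact_mod_cast coalitionLoad_pos hi hr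
  · exact_mod_cast coalitionLoad_le_congestion_dev s t C r

lemma sum_div_coalitionLoad_add_harmonic_erase {C : Finset (Fin n)} (t : Fin n → Finset R)
    {i : Fin n} (hi : i ∈ C) :
    ∑ r ∈ t i, c r / coalitionLoad C t r +
        ∑ r, c r * harmonic (coalitionLoad (C.erase i) t r) =
      ∑ r, c r * harmonic (coalitionLoad C t r) := by
  rw [← univ_inter (t i), ← sum_ite_mem, ← sum_add_distrib]
  refine sum_congr rfl fun r _ => ?_
  by_cases hr : r ∈ t i
  · rw [if_pos hr, ← coalitionLoad_erase_add_one hi hr, harmonic_succ]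
    push_cast
    ring
  · rw [if_neg hr, coalitionLoad_erase_of_notMem hr, zero_add]

theorem sum_shareCost_le_harmonic_of_forall_exists_le (hc : ∀ r, 0 ≤ c r)
    {s t : Fin n → Finset R}
    (hs : ∀ C : Finset (Fin n), C.Nonempty →
      ∃ i ∈ C, shareCost c s i ≤ shareCost c (dev s t C) i)
    (C : Finset (Fin n)) :
    ∑ i ∈ C, shareCost c s i ≤ ∑ r, c r * harmonic (coalitionLoad C t r) := by
  induction C using strongInduction with
  | _ C ih =>
    rcases C.eq_empty_or_nonempty with rfl | hne
    · simp [coalitionLoad]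
    obtain ⟨i, hi, hle⟩ := hs C hne
    calc ∑ j ∈ C, shareCost c s j = shareCost c s i + ∑ j ∈ C.erase i, shareCost c s j :=
          (add_sum_erase _ _ hi).symm
      _ ≤ ∑ r ∈ t i, c r / coalitionLoad C t r +
            ∑ r, c r * harmonic (coalitionLoad (C.erase i) t r) :=
          add_le_add (hle.trans (shareCost_dev_le hc s t hi)) (ih _ (erase_ssubset hi))
      _ = ∑ r, c r * harmonic (coalitionLoad C t r) :=
          sum_div_coalitionLoad_add_harmonic_erase t hi

lemma sum_shareCost_eq_sum_used (t : Fin n → Finset R) :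
    ∑ i, shareCost c t i = ∑ r with congestion t r ≠ 0, c r := by
  simp only [shareCost]
  rw [sum_comm' (t' := univ) (s' := fun r => {i | r ∈ t i}) (by simp), sum_filter]
  refine sum_congr rfl fun r _ => ?_
  rw [sum_const, nsmul_eq_mul]
  change (congestion t r : ℝ) * (c r / congestion t r) = _
  split_ifs with hr
  · field_simp
  · simp [not_ne_iff.1 hr]

lemma congestion_le (t : Fin n → Finset R) (r : R) : congestion t r ≤ n :=
  (card_filter_le _ _).trans_eq (card_fin n)

lemma sum_mul_harmonic_congestion_le (hc : ∀ r, 0 ≤ c r) (t : Fin n → Finset R) :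
    ∑ r, c r * harmonic (congestion t r) ≤ harmonic n * ∑ i, shareCost c t i := by
  rw [sum_shareCost_eq_sum_used, mul_sum, sum_filter]
  gcongr with r
  split_ifs with hr
  · rw [mul_comm]
    gcongr
    · exact hc r
    · exact harmonic_mono (congestion_le t r)
  · simp [not_ne_iff.1 hr]

end CostSharing

theorem cost_sharing_strong_poa_general {n : ℕ} {R : Type*} [Fintype R] [DecidableEq R]
    (c : R → ℝ) (hc : ∀ r, 0 ≤ c r)
    (Strat : Fin n → Set (Finset R))
    (sstar : Fin n → Finset R) (hsstarS : ∀ i, sstar i ∈ Strat i)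
    (s : Fin n → Finset R)
    (hSNE : ∀ C : Finset (Fin n), C.Nonempty →
      ∀ sC : Fin n → Finset R, (∀ i ∈ C, sC i ∈ Strat i) →
      ∃ i ∈ C, shareCost c s i ≤ shareCost c (dev s sC C) i) :
    ∑ i, shareCost c s i ≤
      (∑ k ∈ Finset.range n, 1 / ((k : ℝ) + 1)) * ∑ i, shareCost c sstar i := by
  rw [← harmonic_cast_eq_sum]
  calc ∑ i, shareCost c s i ≤ ∑ r, c r * harmonic (congestion sstar r) :=
        sum_shareCost_le_harmonic_of_forall_exists_le hc
          (fun C hC => hSNE C hC sstar fun i _ => hsstarS i) univ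
    _ ≤ harmonic n * ∑ i, shareCost c sstar i := sum_mul_harmonic_congestion_le hc sstar

/-- in a fair cost-sharing game, every strong Nash equilibrium has
social cost at most H_n times the minimum social cost. -/
theorem cost_sharing_strong_poa {n : ℕ} {R : Type*} [Fintype R] [DecidableEq R]
    (c : R → ℝ) (hc : ∀ r, 0 ≤ c r)
    (Strat : Fin n → Set (Finset R))
    (sstar : Fin n → Finset R) (hsstarS : ∀ i, sstar i ∈ Strat i)
    (hopt : ∀ t : Fin n → Finset R, (∀ i, t i ∈ Strat i) →
      ∑ i, shareCost c sstar i ≤ ∑ i, shareCost c t i)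
    (s : Fin n → Finset R) (hsS : ∀ i, s i ∈ Strat i)
    (hSNE : ∀ C : Finset (Fin n), C.Nonempty →
      ∀ sC : Fin n → Finset R, (∀ i ∈ C, sC i ∈ Strat i) →
      ∃ i ∈ C, shareCost c s i ≤ shareCost c (dev s sC C) i) :
    ∑ i, shareCost c s i ≤
      (∑ k ∈ Finset.range n, 1 / ((k : ℝ) + 1)) * ∑ i, shareCost c sstar i :=
  cost_sharing_strong_poa_general c hc Strat sstar hsstarS s hSNE
end
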